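/- For any two mean-field sequences g¹, g² ∈ ℝ^T, every k ∈ {0, …, T−1}, and every e ∈ ℝⁿ, the value of information satisfies |VoI^{g¹}_k(e) − VoI^{g²}_k(e)| ≤ 2 λ (T − k) · ‖g¹ − g²‖_∞, where ‖·‖_∞ is the sup norm on ℝ^T. -/

import Mathlib

open MeasureTheory Matrix

/-- State–action value functions of the mean-field sensing problem, indexed by
time-to-go: `Qrev T lam A Γ μ g m e a = Q^g_{T-1-m}(e, a)`, defined by the backward
recursion `Q^g_k(e,a) = λ g_k a + ∫ [ e'ᵀ Γ_{k+1} e' + min_a' Q^g_{k+1}(e', a') ] dμ(w)`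
where `e' = (1-a) A e + w` and the terminal value `V^g_T ≡ 0`. -/
noncomputable def Qrev {n : ℕ} (T : ℕ) (lam : ℝ) (A : Matrix (Fin n) (Fin n) ℝ)
    (Γ : ℕ → Matrix (Fin n) (Fin n) ℝ) (μ : Measure (Fin n → ℝ)) (g : ℕ → ℝ) :
    ℕ → (Fin n → ℝ) → ℝ → ℝ
  | 0, e, a =>
      lam * g (T - 1) * a +
        ∫ w, ((1 - a) • (A *ᵥ e) + w) ⬝ᵥ ((Γ T) *ᵥ ((1 - a) • (A *ᵥ e) + w)) ∂μ
  | m + 1, e, a =>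
      lam * g (T - 1 - (m + 1)) * a +
        ∫ w,
          (((1 - a) • (A *ᵥ e) + w) ⬝ᵥ ((Γ (T - (m + 1))) *ᵥ ((1 - a) • (A *ᵥ e) + w)) +
            min (Qrev T lam A Γ μ g m ((1 - a) • (A *ᵥ e) + w) 0)
              (Qrev T lam A Γ μ g m ((1 - a) • (A *ᵥ e) + w) 1)) ∂μ

/-- `Qval T lam A Γ μ g k e a = Q^g_k(e,a)` for `0 ≤ k ≤ T-1`. -/
noncomputable def Qval {n : ℕ} (T : ℕ) (lam : ℝ) (A : Matrix (Fin n) (Fin n) ℝ)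
    (Γ : ℕ → Matrix (Fin n) (Fin n) ℝ) (μ : Measure (Fin n → ℝ)) (g : ℕ → ℝ)
    (k : ℕ) (e : Fin n → ℝ) (a : ℝ) : ℝ :=
  Qrev T lam A Γ μ g (T - 1 - k) e a

/-- Value of information `VoI^g_k(e) = Q^g_k(e,0) - Q^g_k(e,1)`. -/
noncomputable def VoI {n : ℕ} (T : ℕ) (lam : ℝ) (A : Matrix (Fin n) (Fin n) ℝ)
    (Γ : ℕ → Matrix (Fin n) (Fin n) ℝ) (μ : Measure (Fin n → ℝ)) (g : ℕ → ℝ)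
    (k : ℕ) (e : Fin n → ℝ) : ℝ :=
  Qval T lam A Γ μ g k e 0 - Qval T lam A Γ μ g k e 1

/-- Extension of a finite sequence `g ∈ ℝ^T` to `ℕ → ℝ` (by zero). -/
def extendSeq (T : ℕ) (g : Fin T → ℝ) : ℕ → ℝ :=
  fun j => if h : j < T then g ⟨j, h⟩ else 0

/-- The Boltzmann (logistic) function `σ_α(x) = 1/(1 + exp(-α x))`. -/
noncomputable def boltz (α x : ℝ) : ℝ := (1 + Real.exp (-α * x))⁻¹

/-- The mean-field operator `(𝒯 g)_k = ∫ σ_α(VoI^g_k(e)) dν_k(e)`. -/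
noncomputable def Tmf {n : ℕ} (T : ℕ) (lam α : ℝ) (A : Matrix (Fin n) (Fin n) ℝ)
    (Γ : ℕ → Matrix (Fin n) (Fin n) ℝ) (μ : Measure (Fin n → ℝ))
    (ν : Fin T → Measure (Fin n → ℝ)) (g : Fin T → ℝ) : Fin T → ℝ :=
  fun k => ∫ e, boltz α (VoI T lam A Γ μ (extendSeq T g) (k : ℕ) e) ∂(ν k)


/-!
The mean field `g` enters `Q^g_k` only through the sensing costs `λ g_j a`. Going backwards in
time, each stage adds a cost differing by at most `λ‖g¹ - g²‖` (as `a ∈ {0, 1}`), the minimum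
over actions is 1-Lipschitz, and averaging over the noise preserves uniform bounds; hence
`|Q^{g¹}_k - Q^{g²}_k| ≤ λ (T - k) ‖g¹ - g²‖`, and `VoI` is a difference of two such values.
-/

/-- No integrability is assumed: a bounded measurable difference makes `f₁` integrable iff `f₂`
is, and if neither is, both Bochner integrals are `0`. -/
theorem abs_integral_sub_integral_le {α : Type*} [MeasurableSpace α] {μ : Measure α}
    [IsProbabilityMeasure μ] {f₁ f₂ : α → ℝ} {C : ℝ} (hf₁ : AEStronglyMeasurable f₁ μ)
    (hf₂ : AEStronglyMeasurable f₂ μ) (h : ∀ᵐ x ∂μ, |f₁ x - f₂ x| ≤ C) :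
    |∫ x, f₁ x ∂μ - ∫ x, f₂ x ∂μ| ≤ C := by
  have hdiff : Integrable (f₁ - f₂) μ :=
    (integrable_const C).mono' (hf₁.sub hf₂) (by simpa only [Real.norm_eq_abs, Pi.sub_apply])
  by_cases h₁ : Integrable f₁ μ
  · have h₂ : Integrable f₂ μ := by simpa using h₁.sub hdiff
    rw [← integral_sub h₁ h₂, ← Real.norm_eq_abs, ← mul_one C, ← probReal_univ (μ := μ)]
    exact norm_integral_le_of_norm_le_const (by simpa only [Real.norm_eq_abs])
  · have h₂ : ¬Integrable f₂ μ := fun h₂ => h₁ (by simpa using h₂.add hdiff)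
    obtain ⟨x, hx⟩ := h.exists
    rw [integral_undef h₁, integral_undef h₂, sub_self, abs_zero]
    exact (abs_nonneg _).trans hx

theorem measurable_integral_comp_add {X E : Type*} [MeasurableSpace X] [MeasurableSpace E]
    [Add E] [MeasurableAdd₂ E] {μ : Measure E} [SFinite μ] {F : E → ℝ} {L : X → E}
    (hF : Measurable F) (hL : Measurable L) : Measurable fun x => ∫ w, F (L x + w) ∂μ :=
  (hF.comp ((hL.comp measurable_fst).add measurable_snd)).stronglyMeasurable
    |>.integral_prod_right' |>.measurable

theorem measurable_dotProduct_mulVec_self {n : ℕ} (M : Matrix (Fin n) (Fin n) ℝ) :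
    Measurable fun v : Fin n → ℝ => v ⬝ᵥ (M *ᵥ v) :=
  (continuous_id.dotProduct (continuous_const.matrix_mulVec continuous_id)).measurable

theorem measurable_smul_mulVec {n : ℕ} (c : ℝ) (A : Matrix (Fin n) (Fin n) ℝ) :
    Measurable fun e : Fin n → ℝ => c • (A *ᵥ e) :=
  ((continuous_const.matrix_mulVec continuous_id).const_smul c).measurable

theorem abs_mul_mul_sub_mul_mul_le {lam x y a D : ℝ} (hlam : 0 ≤ lam) (hxy : |x - y| ≤ D)
    (ha : |a| ≤ 1) : |lam * x * a - lam * y * a| ≤ lam * D := by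
  rw [← sub_mul, ← mul_sub, abs_mul, abs_mul, abs_of_nonneg hlam]
  calc lam * |x - y| * |a| ≤ lam * D * 1 :=
        mul_le_mul (by gcongr) ha (abs_nonneg a) (mul_nonneg hlam ((abs_nonneg _).trans hxy))
    _ = lam * D := mul_one _

theorem abs_extendSeq_sub_le {T : ℕ} (g₁ g₂ : Fin T → ℝ) (j : ℕ) :
    |extendSeq T g₁ j - extendSeq T g₂ j| ≤ ‖g₁ - g₂‖ := by
  unfold extendSeq
  split_ifs with hj
  · exact norm_le_pi_norm (g₁ - g₂) ⟨j, hj⟩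
  · simp

section Qrev

variable {n T : ℕ} {lam : ℝ} {A : Matrix (Fin n) (Fin n) ℝ} {Γ : ℕ → Matrix (Fin n) (Fin n) ℝ}
  {μ : Measure (Fin n → ℝ)}

theorem measurable_Qrev [SFinite μ] (g : ℕ → ℝ) (m : ℕ) (a : ℝ) :
    Measurable fun e => Qrev T lam A Γ μ g m e a := by
  induction m generalizing a with
  | zero =>
    exact (measurable_integral_comp_add (measurable_dotProduct_mulVec_self _)
      (measurable_smul_mulVec (1 - a) A)).const_add _
  | succ m ih =>
    exact (measurable_integral_comp_add
      ((measurable_dotProduct_mulVec_self _).add ((ih 0).min (ih 1)))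
      (measurable_smul_mulVec (1 - a) A)).const_add _

theorem abs_Qrev_sub_le [IsProbabilityMeasure μ] (hlam : 0 ≤ lam) {g₁ g₂ : ℕ → ℝ} {D : ℝ}
    (hg : ∀ j, |g₁ j - g₂ j| ≤ D) (m : ℕ) (e : Fin n → ℝ) {a : ℝ} (ha : |a| ≤ 1) :
    |Qrev T lam A Γ μ g₁ m e a - Qrev T lam A Γ μ g₂ m e a| ≤ lam * (m + 1) * D := by
  induction m generalizing e a with
  | zero =>
    simp only [Qrev, add_sub_add_right_eq_sub, Nat.cast_zero, zero_add, mul_one]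
    exact abs_mul_mul_sub_mul_mul_le hlam (hg _) ha
  | succ m ih =>
    have hmeas : ∀ g, AEStronglyMeasurable (fun w =>
        ((1 - a) • (A *ᵥ e) + w) ⬝ᵥ (Γ (T - (m + 1)) *ᵥ ((1 - a) • (A *ᵥ e) + w)) +
          min (Qrev T lam A Γ μ g m ((1 - a) • (A *ᵥ e) + w) 0)
            (Qrev T lam A Γ μ g m ((1 - a) • (A *ᵥ e) + w) 1)) μ := fun g =>
      (((measurable_dotProduct_mulVec_self _).add
        ((measurable_Qrev g m 0).min (measurable_Qrev g m 1))).comp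
          (measurable_const_add _)).aestronglyMeasurable
    simp only [Qrev]
    rw [add_sub_add_comm]
    calc _ ≤ _ + _ := abs_add_le _ _
      _ ≤ lam * D + lam * (m + 1) * D := by
        refine add_le_add (abs_mul_mul_sub_mul_mul_le hlam (hg _) ha)
          (abs_integral_sub_integral_le (hmeas g₁) (hmeas g₂) (ae_of_all _ fun w => ?_))
        rw [add_sub_add_left_eq_sub]
        exact (abs_min_sub_min_le_max _ _ _ _).trans
          (max_le (ih _ (by norm_num)) (ih _ (by norm_num)))
      _ = lam * ((m + 1 : ℕ) + 1) * D := by push_cast; ring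

end Qrev

theorem voi_lipschitz_in_mean_field_general
    {n T : ℕ} (lam : ℝ) (hlam : 0 < lam)
    (A : Matrix (Fin n) (Fin n) ℝ) (Γ : ℕ → Matrix (Fin n) (Fin n) ℝ)
    (μ : Measure (Fin n → ℝ)) [IsProbabilityMeasure μ]
    (g₁ g₂ : Fin T → ℝ) (k : ℕ) (hk : k < T) (e : Fin n → ℝ) :
    |VoI T lam A Γ μ (extendSeq T g₁) k e - VoI T lam A Γ μ (extendSeq T g₂) k e| ≤
      2 * lam * ((T : ℝ) - (k : ℝ)) * ‖g₁ - g₂‖ := by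
  have hQ : ∀ a : ℝ, |a| ≤ 1 →
      |Qval T lam A Γ μ (extendSeq T g₁) k e a - Qval T lam A Γ μ (extendSeq T g₂) k e a| ≤
        lam * ((T : ℝ) - k) * ‖g₁ - g₂‖ := fun a ha => by
    have hsteps : ((T - 1 - k : ℕ) : ℝ) + 1 = T - k := by
      rw [← Nat.cast_add_one, show T - 1 - k + 1 = T - k by omega, Nat.cast_sub hk.le]
    simpa only [Qval, hsteps] using
      abs_Qrev_sub_le hlam.le (abs_extendSeq_sub_le g₁ g₂) (T - 1 - k) e ha
  obtain ⟨h0_lower, h0_upper⟩ := abs_le.mp (hQ 0 (by simp))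
  obtain ⟨h1_lower, h1_upper⟩ := abs_le.mp (hQ 1 (by simp))
  rw [VoI, VoI, abs_le]
  constructor <;> linarith

/-- For any two mean-field sequences `g¹, g² ∈ ℝ^T`, every `0 ≤ k ≤ T−1` and `e ∈ ℝⁿ`,
the value of information satisfies `|VoI^{g¹}_k(e) − VoI^{g²}_k(e)| ≤ 2λ(T−k)·‖g¹−g²‖_∞`. -/
theorem voi_lipschitz_in_mean_field
    {n T : ℕ} (hT : 1 ≤ T) (lam : ℝ) (hlam : 0 < lam)
    (A : Matrix (Fin n) (Fin n) ℝ) (Γ : ℕ → Matrix (Fin n) (Fin n) ℝ)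
    (hΓ : ∀ k, (Γ k).PosSemidef)
    (μ : Measure (Fin n → ℝ)) [IsProbabilityMeasure μ]
    (hmom : Integrable (fun w => ‖w‖ ^ 2) μ)
    (g₁ g₂ : Fin T → ℝ) (k : ℕ) (hk : k < T) (e : Fin n → ℝ) :
    |VoI T lam A Γ μ (extendSeq T g₁) k e - VoI T lam A Γ μ (extendSeq T g₂) k e| ≤
      2 * lam * ((T : ℝ) - (k : ℝ)) * ‖g₁ - g₂‖ :=
  voi_lipschitz_in_mean_field_general lam hlam A Γ μ g₁ g₂ k hk e
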